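/- arXiv:2409.17643 — 3 statements merged into one kernel-verified Lean document; each statement's English description precedes it below -/
import Mathlib

section
/- Invertibility theorem: Let T be any representation of finite data (S = S₀ ∪ S₁ disjoint, distribution ζ on S, conditional label distributions ρ_s ∈ Δ_𝒴) on a finite set 𝒵. Then there exists an invertible representation T' on some finite set 𝒵' (i.e., for each z' ∈ 𝒵' and each a ∈ {0,1} there is at most one s ∈ S_a with T'_a(z', s) > 0) such that E_{z'∼Z'}[h(P(Y|Z'=z'))] ≤ E_{z∼Z}[h(P(Y|Z=z))] and ‖μ'₀ − μ'₁‖_TV = ‖μ₀ − μ₁‖_TV, for any concave h : Δ_𝒴 → ℝ. -/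
open Finset

variable {S₀ S₁ 𝒴 : Type*}

/-- Probability of the representation value `z`. -/
noncomputable def reprPZ [Fintype S₀] [Fintype S₁] {Z : Type*}
    (ζ : S₀ ⊕ S₁ → ℝ) (T : Z → S₀ ⊕ S₁ → ℝ) (z : Z) : ℝ :=
  ∑ s, ζ s * T z s

/-- Posterior distribution of the label `Y` given `Z = z` (Bayes rule). -/
noncomputable def reprPost [Fintype S₀] [Fintype S₁] {Z : Type*}
    (ζ : S₀ ⊕ S₁ → ℝ) (ρ : S₀ ⊕ S₁ → 𝒴 → ℝ) (T : Z → S₀ ⊕ S₁ → ℝ)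
    (z : Z) (y : 𝒴) : ℝ :=
  (∑ s, ζ s * ρ s y * T z s) / reprPZ ζ T z

/-- The performance cost `E_{z∼Z}[h(P(Y|Z=z))]` of a representation. -/
noncomputable def reprCost [Fintype S₀] [Fintype S₁] {Z : Type*} [Fintype Z]
    (ζ : S₀ ⊕ S₁ → ℝ) (ρ : S₀ ⊕ S₁ → 𝒴 → ℝ) (T : Z → S₀ ⊕ S₁ → ℝ)
    (h : (𝒴 → ℝ) → ℝ) : ℝ :=
  ∑ z, reprPZ ζ T z * h (reprPost ζ ρ T z)

/-- `μ_a(z) = P(Z = z | A = a)` for `a = 0` (side `S₀`). -/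
noncomputable def reprMu0 [Fintype S₀] [Fintype S₁] {Z : Type*}
    (ζ : S₀ ⊕ S₁ → ℝ) (T : Z → S₀ ⊕ S₁ → ℝ) (z : Z) : ℝ :=
  ∑ s : S₀, (ζ (Sum.inl s) / ∑ s' : S₀, ζ (Sum.inl s')) * T z (Sum.inl s)

/-- `μ_a(z) = P(Z = z | A = a)` for `a = 1` (side `S₁`). -/
noncomputable def reprMu1 [Fintype S₀] [Fintype S₁] {Z : Type*}
    (ζ : S₀ ⊕ S₁ → ℝ) (T : Z → S₀ ⊕ S₁ → ℝ) (z : Z) : ℝ :=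
  ∑ s : S₁, (ζ (Sum.inr s) / ∑ s' : S₁, ζ (Sum.inr s')) * T z (Sum.inr s)

/-- Total variation distance between the two induced distributions. -/
noncomputable def reprTV [Fintype S₀] [Fintype S₁] {Z : Type*} [Fintype Z]
    (ζ : S₀ ⊕ S₁ → ℝ) (T : Z → S₀ ⊕ S₁ → ℝ) : ℝ :=
  (1 / 2) * ∑ z, |reprMu0 ζ T z - reprMu1 ζ T z|

/-- A representation is invertible if every `z` has at most one parent on each side. -/
def reprInvertible {Z : Type*} (T : Z → S₀ ⊕ S₁ → ℝ) : Prop :=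
  ∀ z : Z, (∀ s s' : S₀, 0 < T z (Sum.inl s) → 0 < T z (Sum.inl s') → s = s') ∧
           (∀ s s' : S₁, 0 < T z (Sum.inr s) → 0 < T z (Sum.inr s') → s = s')


/-! ### Auxiliary constructions -/

/-- Conditional distribution associated to a nonnegative weight vector, with a
uniform fallback when the total mass is zero. -/
noncomputable def condP {ι : Type*} [Fintype ι] (w : ι → ℝ) (t : ι) : ℝ :=
  if 0 < ∑ s, w s then w t / ∑ s, w s else (Fintype.card ι : ℝ)⁻¹

lemma condP_nonneg {ι : Type*} [Fintype ι] {w : ι → ℝ} (hw : ∀ s, 0 ≤ w s) (t : ι) :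
    0 ≤ condP w t := by
  unfold condP
  split
  · exact div_nonneg (hw t) (le_of_lt (by assumption))
  · positivity

lemma condP_sum {ι : Type*} [Fintype ι] [Nonempty ι] (w : ι → ℝ) :
    ∑ t, condP w t = 1 := by
  unfold condP
  split
  · rw [← Finset.sum_div, div_self (ne_of_gt (by assumption))]
  · rw [Finset.sum_const, Finset.card_univ, nsmul_eq_mul,
      mul_inv_cancel₀ (Nat.cast_ne_zero.mpr Fintype.card_ne_zero)]

lemma condP_mul {ι : Type*} [Fintype ι] {w : ι → ℝ} (hw : ∀ s, 0 ≤ w s) (t : ι) :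
    w t = (∑ s, w s) * condP w t := by
  unfold condP
  split
  · rw [mul_comm, div_mul_cancel₀ _ (ne_of_gt (by assumption))]
  · rename_i hlt
    have hs : ∑ s, w s = 0 :=
      le_antisymm (not_lt.1 hlt) (Finset.sum_nonneg fun s _ => hw s)
    have ht := (Finset.sum_eq_zero_iff_of_nonneg (fun s _ => hw s)).1 hs t (Finset.mem_univ t)
    rw [ht, hs, zero_mul]

/-- The refined (invertible) representation on `Z × S₀ × S₁`. -/
noncomputable def Tnew [Fintype S₀] [Fintype S₁] [DecidableEq S₀] [DecidableEq S₁] {Z : Type*}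
    (ζ : S₀ ⊕ S₁ → ℝ) (T : Z → S₀ ⊕ S₁ → ℝ) :
    Z × S₀ × S₁ → S₀ ⊕ S₁ → ℝ := fun p s =>
  match s with
  | Sum.inl t => (if t = p.2.1 then T p.1 (Sum.inl t) else 0) *
      condP (fun u => ζ (Sum.inr u) * T p.1 (Sum.inr u)) p.2.2
  | Sum.inr u => (if u = p.2.2 then T p.1 (Sum.inr u) else 0) *
      condP (fun t => ζ (Sum.inl t) * T p.1 (Sum.inl t)) p.2.1

lemma sum_pair_split {α β : Type*} [Fintype α] [Fintype β]
    (A d : α → ℝ) (B c : β → ℝ) (hc : ∑ b, c b = 1) (hd : ∑ a, d a = 1) :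
    ∑ a, ∑ b, (A a * c b + B b * d a) = (∑ a, A a) + (∑ b, B b) := by
  have h1 : ∀ a, ∑ b, (A a * c b + B b * d a) = A a + (∑ b, B b) * d a := by
    intro a
    rw [Finset.sum_add_distrib, ← Finset.mul_sum, hc, mul_one, ← Finset.sum_mul]
  rw [Finset.sum_congr rfl fun a _ => h1 a, Finset.sum_add_distrib, ← Finset.mul_sum, hd,
    mul_one]

lemma numer_sum_y [Fintype S₀] [Fintype S₁] [Fintype 𝒴]
    (ζ : S₀ ⊕ S₁ → ℝ) (ρ : S₀ ⊕ S₁ → 𝒴 → ℝ) (hρ1 : ∀ s, ∑ y, ρ s y = 1)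
    {Z : Type*} (T : Z → S₀ ⊕ S₁ → ℝ) (z : Z) :
    ∑ y, ∑ s, ζ s * ρ s y * T z s = reprPZ ζ T z := by
  rw [Finset.sum_comm]
  unfold reprPZ
  refine Finset.sum_congr rfl fun s _ => ?_
  calc ∑ y, ζ s * ρ s y * T z s = ∑ y, (ζ s * T z s) * ρ s y :=
        Finset.sum_congr rfl fun y _ => by ring
    _ = (ζ s * T z s) * ∑ y, ρ s y := by rw [Finset.mul_sum]
    _ = ζ s * T z s := by rw [hρ1, mul_one]

theorem invertibility_theorem
    [Fintype S₀] [Fintype S₁] [Fintype 𝒴]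
    (ζ : S₀ ⊕ S₁ → ℝ) (hζ : ∀ s, 0 ≤ ζ s) (hζ1 : ∑ s, ζ s = 1)
    (hζ₀ : 0 < ∑ s : S₀, ζ (Sum.inl s)) (hζ₁ : 0 < ∑ s : S₁, ζ (Sum.inr s))
    (ρ : S₀ ⊕ S₁ → 𝒴 → ℝ) (hρ : ∀ s, ρ s ∈ stdSimplex ℝ 𝒴)
    (Z : Type*) [Fintype Z]
    (T : Z → S₀ ⊕ S₁ → ℝ) (hT : ∀ z s, 0 ≤ T z s) (hT1 : ∀ s, ∑ z, T z s = 1) :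
    ∃ (n : ℕ) (T' : Fin n → S₀ ⊕ S₁ → ℝ),
      (∀ z s, 0 ≤ T' z s) ∧ (∀ s, ∑ z, T' z s = 1) ∧
      reprInvertible T' ∧
      (∀ h : (𝒴 → ℝ) → ℝ, ConcaveOn ℝ (stdSimplex ℝ 𝒴) h →
        reprCost ζ ρ T' h ≤ reprCost ζ ρ T h) ∧
      reprTV ζ T' = reprTV ζ T := by
  classical
  have hρ0 : ∀ s y, 0 ≤ ρ s y := fun s y => (hρ s).1 y
  have hρ1 : ∀ s, ∑ y, ρ s y = 1 := fun s => (hρ s).2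
  have hS0 : Nonempty S₀ := by
    by_contra hc
    rw [not_nonempty_iff] at hc
    simp at hζ₀
  have hS1 : Nonempty S₁ := by
    by_contra hc
    rw [not_nonempty_iff] at hc
    simp at hζ₁
  have hw0 : ∀ (z : Z) (t : S₀), 0 ≤ ζ (Sum.inl t) * T z (Sum.inl t) :=
    fun z t => mul_nonneg (hζ _) (hT _ _)
  have hw1 : ∀ (z : Z) (u : S₁), 0 ≤ ζ (Sum.inr u) * T z (Sum.inr u) :=
    fun z u => mul_nonneg (hζ _) (hT _ _)
  have hc0 : ∀ (z : Z) (t : S₀),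
      0 ≤ condP (fun t' => ζ (Sum.inl t') * T z (Sum.inl t')) t :=
    fun z t => condP_nonneg (hw0 z) t
  have hc1 : ∀ (z : Z) (u : S₁),
      0 ≤ condP (fun u' => ζ (Sum.inr u') * T z (Sum.inr u')) u :=
    fun z u => condP_nonneg (hw1 z) u
  have hc0s : ∀ z : Z, ∑ t, condP (fun t' : S₀ => ζ (Sum.inl t') * T z (Sum.inl t')) t = 1 :=
    fun z => condP_sum _
  have hc1s : ∀ z : Z, ∑ u, condP (fun u' : S₁ => ζ (Sum.inr u') * T z (Sum.inr u')) u = 1 :=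
    fun z => condP_sum _
  have hTn0 : ∀ p s, 0 ≤ Tnew ζ T p s := by
    rintro ⟨z, a, b⟩ (t | u)
    · refine mul_nonneg ?_ (hc1 z b)
      dsimp only [Tnew]
      split <;> [exact hT _ _; exact le_rfl]
    · refine mul_nonneg ?_ (hc0 z a)
      dsimp only [Tnew]
      split <;> [exact hT _ _; exact le_rfl]
  -- the two key pointwise formulas
  have hPZ : ∀ (z : Z) (a : S₀) (b : S₁),
      reprPZ ζ (Tnew ζ T) (z, a, b) =
        ζ (Sum.inl a) * T z (Sum.inl a) *
            condP (fun u => ζ (Sum.inr u) * T z (Sum.inr u)) b +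
          ζ (Sum.inr b) * T z (Sum.inr b) *
            condP (fun t => ζ (Sum.inl t) * T z (Sum.inl t)) a := by
    intro z a b
    rw [reprPZ, Fintype.sum_sum_type]
    simp only [Tnew, mul_ite, ite_mul, mul_zero, zero_mul, Finset.sum_ite_eq',
      Finset.mem_univ, if_true]
    ring
  have hNum : ∀ (z : Z) (a : S₀) (b : S₁) (y : 𝒴),
      ∑ s, ζ s * ρ s y * Tnew ζ T (z, a, b) s =
        ζ (Sum.inl a) * ρ (Sum.inl a) y * T z (Sum.inl a) *
            condP (fun u => ζ (Sum.inr u) * T z (Sum.inr u)) b +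
          ζ (Sum.inr b) * ρ (Sum.inr b) y * T z (Sum.inr b) *
            condP (fun t => ζ (Sum.inl t) * T z (Sum.inl t)) a := by
    intro z a b y
    rw [Fintype.sum_sum_type]
    simp only [Tnew, mul_ite, ite_mul, mul_zero, zero_mul, Finset.sum_ite_eq',
      Finset.mem_univ, if_true]
    ring
  -- aggregation over the children of a fixed z
  have hPZs : ∀ z : Z, ∑ p : S₀ × S₁, reprPZ ζ (Tnew ζ T) (z, p) = reprPZ ζ T z := by
    intro z
    rw [Fintype.sum_prod_type]
    calc ∑ a, ∑ b, reprPZ ζ (Tnew ζ T) (z, a, b)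
        = ∑ a, ∑ b, (ζ (Sum.inl a) * T z (Sum.inl a) *
              condP (fun u => ζ (Sum.inr u) * T z (Sum.inr u)) b +
            ζ (Sum.inr b) * T z (Sum.inr b) *
              condP (fun t => ζ (Sum.inl t) * T z (Sum.inl t)) a) :=
          Finset.sum_congr rfl fun a _ => Finset.sum_congr rfl fun b _ => hPZ z a b
      _ = (∑ a, ζ (Sum.inl a) * T z (Sum.inl a)) + ∑ b, ζ (Sum.inr b) * T z (Sum.inr b) :=
          sum_pair_split _ _ _ _ (hc1s z) (hc0s z)
      _ = reprPZ ζ T z := by rw [reprPZ, Fintype.sum_sum_type]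
  have hNums : ∀ (z : Z) (y : 𝒴),
      ∑ p : S₀ × S₁, (∑ s, ζ s * ρ s y * Tnew ζ T (z, p) s) = ∑ s, ζ s * ρ s y * T z s := by
    intro z y
    rw [Fintype.sum_prod_type]
    calc ∑ a, ∑ b, (∑ s, ζ s * ρ s y * Tnew ζ T (z, a, b) s)
        = ∑ a, ∑ b, (ζ (Sum.inl a) * ρ (Sum.inl a) y * T z (Sum.inl a) *
              condP (fun u => ζ (Sum.inr u) * T z (Sum.inr u)) b +
            ζ (Sum.inr b) * ρ (Sum.inr b) y * T z (Sum.inr b) *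
              condP (fun t => ζ (Sum.inl t) * T z (Sum.inl t)) a) :=
          Finset.sum_congr rfl fun a _ => Finset.sum_congr rfl fun b _ => hNum z a b y
      _ = (∑ a, ζ (Sum.inl a) * ρ (Sum.inl a) y * T z (Sum.inl a)) +
            ∑ b, ζ (Sum.inr b) * ρ (Sum.inr b) y * T z (Sum.inr b) :=
          sum_pair_split _ _ _ _ (hc1s z) (hc0s z)
      _ = ∑ s, ζ s * ρ s y * T z s := by rw [Fintype.sum_sum_type]
  -- basic positivity facts
  have hPZn : ∀ p, 0 ≤ reprPZ ζ (Tnew ζ T) p :=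
    fun p => Finset.sum_nonneg fun s _ => mul_nonneg (hζ s) (hTn0 p s)
  have hPZnz : ∀ z : Z, 0 ≤ reprPZ ζ T z :=
    fun z => Finset.sum_nonneg fun s _ => mul_nonneg (hζ s) (hT z s)
  have hNn : ∀ p y, 0 ≤ ∑ s, ζ s * ρ s y * Tnew ζ T p s :=
    fun p y => Finset.sum_nonneg fun s _ =>
      mul_nonneg (mul_nonneg (hζ s) (hρ0 s y)) (hTn0 p s)
  have hNy : ∀ p, ∑ y, ∑ s, ζ s * ρ s y * Tnew ζ T p s = reprPZ ζ (Tnew ζ T) p :=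
    fun p => numer_sum_y ζ ρ hρ1 (Tnew ζ T) p
  have hNzero : ∀ p y, reprPZ ζ (Tnew ζ T) p = 0 →
      ∑ s, ζ s * ρ s y * Tnew ζ T p s = 0 := by
    intro p y hp
    have h0 : ∑ y, ∑ s, ζ s * ρ s y * Tnew ζ T p s = 0 := by rw [hNy p, hp]
    exact (Finset.sum_eq_zero_iff_of_nonneg (fun y _ => hNn p y)).1 h0 y (Finset.mem_univ y)
  -- the Jensen step, for a fixed parent z
  have costz : ∀ (h : (𝒴 → ℝ) → ℝ), ConcaveOn ℝ (stdSimplex ℝ 𝒴) h → ∀ z : Z,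
      ∑ p : S₀ × S₁,
          reprPZ ζ (Tnew ζ T) (z, p) * h (reprPost ζ ρ (Tnew ζ T) (z, p)) ≤
        reprPZ ζ T z * h (reprPost ζ ρ T z) := by
    intro h hconc z
    rcases eq_or_lt_of_le (hPZnz z) with hz | hz
    · have hall : ∀ p : S₀ × S₁, reprPZ ζ (Tnew ζ T) (z, p) = 0 := by
        intro p
        have hsum : ∑ p : S₀ × S₁, reprPZ ζ (Tnew ζ T) (z, p) = 0 := by
          rw [hPZs z, ← hz]
        exact (Finset.sum_eq_zero_iff_of_nonneg
          (fun p _ => hPZn (z, p))).1 hsum p (Finset.mem_univ p)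
      rw [← hz, zero_mul]
      refine le_of_eq (Finset.sum_eq_zero fun p _ => ?_)
      rw [hall p, zero_mul]
    · have hzne : reprPZ ζ T z ≠ 0 := ne_of_gt hz
      set tF := Finset.univ.filter
        (fun p : S₀ × S₁ => 0 < reprPZ ζ (Tnew ζ T) (z, p)) with htF
      have hmemF : ∀ p ∈ tF, 0 < reprPZ ζ (Tnew ζ T) (z, p) := by
        intro p hp
        exact (Finset.mem_filter.1 hp).2
      have hsumF : ∑ p ∈ tF, reprPZ ζ (Tnew ζ T) (z, p) = reprPZ ζ T z := by
        rw [htF, Finset.sum_filter_of_ne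
          (fun p _ hne => lt_of_le_of_ne (hPZn (z, p)) (Ne.symm hne)), hPZs z]
      have hsumNF : ∀ y : 𝒴,
          ∑ p ∈ tF, (∑ s, ζ s * ρ s y * Tnew ζ T (z, p) s) = ∑ s, ζ s * ρ s y * T z s := by
        intro y
        rw [htF, Finset.sum_filter_of_ne, hNums z y]
        intro p _ hne
        by_contra hnot
        exact hne (hNzero (z, p) y (le_antisymm (not_lt.1 hnot) (hPZn (z, p))))
      have hw : ∀ p ∈ tF, (0:ℝ) ≤ reprPZ ζ (Tnew ζ T) (z, p) / reprPZ ζ T z :=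
        fun p _ => div_nonneg (hPZn (z, p)) hz.le
      have hw1 : ∑ p ∈ tF, reprPZ ζ (Tnew ζ T) (z, p) / reprPZ ζ T z = 1 := by
        rw [← Finset.sum_div, hsumF, div_self hzne]
      have hmem : ∀ p ∈ tF, reprPost ζ ρ (Tnew ζ T) (z, p) ∈ stdSimplex ℝ 𝒴 := by
        intro p hp
        have hppos := hmemF p hp
        refine ⟨fun y => div_nonneg (hNn (z, p) y) (hPZn (z, p)), ?_⟩
        show ∑ y, (∑ s, ζ s * ρ s y * Tnew ζ T (z, p) s) / reprPZ ζ (Tnew ζ T) (z, p) = 1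
        rw [← Finset.sum_div, hNy (z, p), div_self (ne_of_gt hppos)]
      have hjensen := hconc.le_map_sum hw hw1 hmem
      have harg : ∑ p ∈ tF, (reprPZ ζ (Tnew ζ T) (z, p) / reprPZ ζ T z) •
          reprPost ζ ρ (Tnew ζ T) (z, p) = reprPost ζ ρ T z := by
        funext y
        rw [Finset.sum_apply]
        have hterm : ∀ p ∈ tF,
            ((reprPZ ζ (Tnew ζ T) (z, p) / reprPZ ζ T z) •
              reprPost ζ ρ (Tnew ζ T) (z, p)) y =
            (∑ s, ζ s * ρ s y * Tnew ζ T (z, p) s) / reprPZ ζ T z := by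
          intro p hp
          have hppos := hmemF p hp
          show (reprPZ ζ (Tnew ζ T) (z, p) / reprPZ ζ T z) *
              ((∑ s, ζ s * ρ s y * Tnew ζ T (z, p) s) / reprPZ ζ (Tnew ζ T) (z, p)) =
            (∑ s, ζ s * ρ s y * Tnew ζ T (z, p) s) / reprPZ ζ T z
          field_simp
        rw [Finset.sum_congr rfl hterm, ← Finset.sum_div, hsumNF y]
        rfl
      rw [harg] at hjensen
      have hfin : ∑ p : S₀ × S₁,
          reprPZ ζ (Tnew ζ T) (z, p) * h (reprPost ζ ρ (Tnew ζ T) (z, p)) =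
          ∑ p ∈ tF, reprPZ ζ (Tnew ζ T) (z, p) * h (reprPost ζ ρ (Tnew ζ T) (z, p)) := by
        rw [htF, Finset.sum_filter_of_ne]
        intro p _ hne
        by_contra hnot
        have h0 : reprPZ ζ (Tnew ζ T) (z, p) = 0 :=
          le_antisymm (not_lt.1 hnot) (hPZn (z, p))
        exact hne (by rw [h0, zero_mul])
      rw [hfin]
      calc ∑ p ∈ tF, reprPZ ζ (Tnew ζ T) (z, p) * h (reprPost ζ ρ (Tnew ζ T) (z, p))
          = reprPZ ζ T z * ∑ p ∈ tF, (reprPZ ζ (Tnew ζ T) (z, p) / reprPZ ζ T z) •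
              h (reprPost ζ ρ (Tnew ζ T) (z, p)) := by
            rw [Finset.mul_sum]
            refine Finset.sum_congr rfl fun p _ => ?_
            rw [smul_eq_mul, ← mul_assoc, mul_comm (reprPZ ζ T z), div_mul_cancel₀ _ hzne]
        _ ≤ reprPZ ζ T z * h (reprPost ζ ρ T z) :=
            mul_le_mul_of_nonneg_left hjensen hz.le
  -- assemble everything
  set e := (Fintype.equivFin (Z × S₀ × S₁)).symm with he
  refine ⟨Fintype.card (Z × S₀ × S₁), fun i => Tnew ζ T (e i), fun i s => hTn0 _ s, ?_, ?_, ?_, ?_⟩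
  · -- normalization
    intro s
    rw [Equiv.sum_comp e (fun p => Tnew ζ T p s)]
    rcases s with t | u
    · rw [Fintype.sum_prod_type]
      have hone : ∀ z : Z, ∑ q : S₀ × S₁, Tnew ζ T (z, q) (Sum.inl t) = T z (Sum.inl t) := by
        intro z
        rw [Fintype.sum_prod_type]
        have hb : ∀ a : S₀, ∑ b : S₁, Tnew ζ T (z, a, b) (Sum.inl t) =
            (if t = a then T z (Sum.inl t) else 0) := by
          intro a
          show ∑ b : S₁, (if t = a then T z (Sum.inl t) else 0) *
              condP (fun u => ζ (Sum.inr u) * T z (Sum.inr u)) b = _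
          rw [← Finset.mul_sum, hc1s z, mul_one]
        rw [Finset.sum_congr rfl fun a _ => hb a, Finset.sum_ite_eq, if_pos (Finset.mem_univ t)]
      rw [Finset.sum_congr rfl fun z _ => hone z, hT1]
    · rw [Fintype.sum_prod_type]
      have hone : ∀ z : Z, ∑ q : S₀ × S₁, Tnew ζ T (z, q) (Sum.inr u) = T z (Sum.inr u) := by
        intro z
        rw [Fintype.sum_prod_type]
        have hb : ∀ a : S₀, ∑ b : S₁, Tnew ζ T (z, a, b) (Sum.inr u) =
            condP (fun t => ζ (Sum.inl t) * T z (Sum.inl t)) a * T z (Sum.inr u) := by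
          intro a
          show ∑ b : S₁, (if u = b then T z (Sum.inr u) else 0) *
              condP (fun t => ζ (Sum.inl t) * T z (Sum.inl t)) a = _
          rw [← Finset.sum_mul]
          rw [Finset.sum_ite_eq, if_pos (Finset.mem_univ u), mul_comm]
        rw [Finset.sum_congr rfl fun a _ => hb a, ← Finset.sum_mul, hc0s z, one_mul]
      rw [Finset.sum_congr rfl fun z _ => hone z, hT1]
  · -- invertibility
    intro i
    have hl : ∀ s : S₀, 0 < Tnew ζ T (e i) (Sum.inl s) → s = (e i).2.1 := by
      intro s hpos
      by_contra hne
      rw [show Tnew ζ T (e i) (Sum.inl s) = (if s = (e i).2.1 then T (e i).1 (Sum.inl s) else 0) *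
          condP (fun u => ζ (Sum.inr u) * T (e i).1 (Sum.inr u)) (e i).2.2 from rfl,
        if_neg hne, zero_mul] at hpos
      exact lt_irrefl 0 hpos
    have hr : ∀ s : S₁, 0 < Tnew ζ T (e i) (Sum.inr s) → s = (e i).2.2 := by
      intro s hpos
      by_contra hne
      rw [show Tnew ζ T (e i) (Sum.inr s) = (if s = (e i).2.2 then T (e i).1 (Sum.inr s) else 0) *
          condP (fun t => ζ (Sum.inl t) * T (e i).1 (Sum.inl t)) (e i).2.1 from rfl,
        if_neg hne, zero_mul] at hpos
      exact lt_irrefl 0 hpos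
    exact ⟨fun s s' hs hs' => (hl s hs).trans (hl s' hs').symm,
      fun s s' hs hs' => (hr s hs).trans (hr s' hs').symm⟩
  · -- cost
    intro h hconc
    have hcost : reprCost ζ ρ (fun i => Tnew ζ T (e i)) h =
        ∑ p : Z × S₀ × S₁, reprPZ ζ (Tnew ζ T) p * h (reprPost ζ ρ (Tnew ζ T) p) :=
      Equiv.sum_comp e (fun p => reprPZ ζ (Tnew ζ T) p * h (reprPost ζ ρ (Tnew ζ T) p))
    rw [hcost, Fintype.sum_prod_type]
    exact Finset.sum_le_sum fun z _ => costz h hconc z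
  · -- total variation
    have hMu0 : ∀ (z : Z) (a : S₀) (b : S₁),
        reprMu0 ζ (Tnew ζ T) (z, a, b) = reprMu0 ζ T z *
          (condP (fun t => ζ (Sum.inl t) * T z (Sum.inl t)) a *
            condP (fun u => ζ (Sum.inr u) * T z (Sum.inr u)) b) := by
      intro z a b
      have e1 : reprMu0 ζ T z =
          (∑ t, ζ (Sum.inl t) * T z (Sum.inl t)) / (∑ t : S₀, ζ (Sum.inl t)) := by
        rw [reprMu0, Finset.sum_div]
        exact Finset.sum_congr rfl fun t _ => div_mul_eq_mul_div _ _ _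
      have key : ζ (Sum.inl a) * (T z (Sum.inl a) *
            condP (fun u => ζ (Sum.inr u) * T z (Sum.inr u)) b) =
          (∑ t, ζ (Sum.inl t) * T z (Sum.inl t)) *
            (condP (fun t => ζ (Sum.inl t) * T z (Sum.inl t)) a *
              condP (fun u => ζ (Sum.inr u) * T z (Sum.inr u)) b) := by
        have hk := condP_mul (hw0 z) a
        calc ζ (Sum.inl a) * (T z (Sum.inl a) *
              condP (fun u => ζ (Sum.inr u) * T z (Sum.inr u)) b)
            = (ζ (Sum.inl a) * T z (Sum.inl a)) *
              condP (fun u => ζ (Sum.inr u) * T z (Sum.inr u)) b := by ring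
          _ = ((∑ t, ζ (Sum.inl t) * T z (Sum.inl t)) *
                condP (fun t => ζ (Sum.inl t) * T z (Sum.inl t)) a) *
              condP (fun u => ζ (Sum.inr u) * T z (Sum.inr u)) b := by rw [← hk]
          _ = _ := by ring
      rw [reprMu0]
      simp only [Tnew, mul_ite, ite_mul, mul_zero, zero_mul, Finset.sum_ite_eq',
        Finset.mem_univ, if_true]
      rw [e1, div_mul_eq_mul_div, div_mul_eq_mul_div, key]
    have hMu1 : ∀ (z : Z) (a : S₀) (b : S₁),
        reprMu1 ζ (Tnew ζ T) (z, a, b) = reprMu1 ζ T z *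
          (condP (fun t => ζ (Sum.inl t) * T z (Sum.inl t)) a *
            condP (fun u => ζ (Sum.inr u) * T z (Sum.inr u)) b) := by
      intro z a b
      have e1 : reprMu1 ζ T z =
          (∑ u, ζ (Sum.inr u) * T z (Sum.inr u)) / (∑ u : S₁, ζ (Sum.inr u)) := by
        rw [reprMu1, Finset.sum_div]
        exact Finset.sum_congr rfl fun u _ => div_mul_eq_mul_div _ _ _
      have key : ζ (Sum.inr b) * (T z (Sum.inr b) *
            condP (fun t => ζ (Sum.inl t) * T z (Sum.inl t)) a) =
          (∑ u, ζ (Sum.inr u) * T z (Sum.inr u)) *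
            (condP (fun t => ζ (Sum.inl t) * T z (Sum.inl t)) a *
              condP (fun u => ζ (Sum.inr u) * T z (Sum.inr u)) b) := by
        have hk := condP_mul (hw1 z) b
        calc ζ (Sum.inr b) * (T z (Sum.inr b) *
              condP (fun t => ζ (Sum.inl t) * T z (Sum.inl t)) a)
            = (ζ (Sum.inr b) * T z (Sum.inr b)) *
              condP (fun t => ζ (Sum.inl t) * T z (Sum.inl t)) a := by ring
          _ = ((∑ u, ζ (Sum.inr u) * T z (Sum.inr u)) *
                condP (fun u => ζ (Sum.inr u) * T z (Sum.inr u)) b) *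
              condP (fun t => ζ (Sum.inl t) * T z (Sum.inl t)) a := by rw [← hk]
          _ = _ := by ring
      rw [reprMu1]
      simp only [Tnew, mul_ite, ite_mul, mul_zero, zero_mul, Finset.sum_ite_eq',
        Finset.mem_univ, if_true]
      rw [e1, div_mul_eq_mul_div, div_mul_eq_mul_div, key]
    have habs : ∀ z : Z, ∑ q : S₀ × S₁,
        |reprMu0 ζ (Tnew ζ T) (z, q) - reprMu1 ζ (Tnew ζ T) (z, q)| =
        |reprMu0 ζ T z - reprMu1 ζ T z| := by
      intro z
      rw [Fintype.sum_prod_type]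
      have hab : ∀ (a : S₀) (b : S₁),
          |reprMu0 ζ (Tnew ζ T) (z, a, b) - reprMu1 ζ (Tnew ζ T) (z, a, b)| =
          |reprMu0 ζ T z - reprMu1 ζ T z| *
            (condP (fun t => ζ (Sum.inl t) * T z (Sum.inl t)) a *
              condP (fun u => ζ (Sum.inr u) * T z (Sum.inr u)) b) := by
        intro a b
        rw [hMu0 z a b, hMu1 z a b, ← sub_mul, abs_mul,
          abs_of_nonneg (mul_nonneg (hc0 z a) (hc1 z b))]
      calc ∑ a, ∑ b, |reprMu0 ζ (Tnew ζ T) (z, a, b) - reprMu1 ζ (Tnew ζ T) (z, a, b)|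
          = ∑ a, ∑ b, |reprMu0 ζ T z - reprMu1 ζ T z| *
              (condP (fun t => ζ (Sum.inl t) * T z (Sum.inl t)) a *
                condP (fun u => ζ (Sum.inr u) * T z (Sum.inr u)) b) :=
            Finset.sum_congr rfl fun a _ => Finset.sum_congr rfl fun b _ => hab a b
        _ = ∑ a, |reprMu0 ζ T z - reprMu1 ζ T z| *
              condP (fun t => ζ (Sum.inl t) * T z (Sum.inl t)) a := by
            refine Finset.sum_congr rfl fun a _ => ?_
            calc ∑ b, |reprMu0 ζ T z - reprMu1 ζ T z| *
                  (condP (fun t => ζ (Sum.inl t) * T z (Sum.inl t)) a *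
                    condP (fun u => ζ (Sum.inr u) * T z (Sum.inr u)) b)
                = ∑ b, (|reprMu0 ζ T z - reprMu1 ζ T z| *
                    condP (fun t => ζ (Sum.inl t) * T z (Sum.inl t)) a) *
                    condP (fun u => ζ (Sum.inr u) * T z (Sum.inr u)) b :=
                  Finset.sum_congr rfl fun b _ => by ring
              _ = _ := by rw [← Finset.mul_sum, hc1s z, mul_one]
        _ = |reprMu0 ζ T z - reprMu1 ζ T z| := by rw [← Finset.mul_sum, hc0s z, mul_one]
    have htv : reprTV ζ (fun i => Tnew ζ T (e i)) =
        (1 / 2) * ∑ p : Z × S₀ × S₁,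
          |reprMu0 ζ (Tnew ζ T) p - reprMu1 ζ (Tnew ζ T) p| :=
      congrArg ((1:ℝ)/2 * ·)
        (Equiv.sum_comp e (fun p => |reprMu0 ζ (Tnew ζ T) p - reprMu1 ζ (Tnew ζ T) p|))
    rw [htv, Fintype.sum_prod_type, Finset.sum_congr rfl fun z _ => habs z]
    rfl
end

section
/- Uniform approximation of two-point representations: For every ε > 0 there exists n (depending only on h) such that: for every two-point representation with weights (c₀^j, c₁^j)_{j≤k} ∈ (ℝ₊²)^k (any k), there exists (c'₀^i, c'₁^i)_{i≤n} with ∑_i c'_a^i = ∑_j c_a^j for a ∈ {0,1}, ∑_i |c'₀^i/α₀ − c'₁^i/α₁| ≤ ∑_j |c₀^j/α₀ − c₁^j/α₁|, and |E' − E| ≤ 2(w_u + w_v)ε, where E = ∑_j (c₀^j + c₁^j)·h((c₀^j ρ_u + c₁^j ρ_v)/(c₀^j + c₁^j)), E' is defined analogously with the c'^i, w_u = ∑_j c₀^j/α₀ and w_v = ∑_j c₁^j/α₁. -/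
open Finset

theorem uniform_approximation_two_point
    (𝒴 : Type*) [Fintype 𝒴]
    (h : (𝒴 → ℝ) → ℝ) (hcont : ContinuousOn h (stdSimplex ℝ 𝒴)) :
    ∀ ε : ℝ, 0 < ε →
    ∃ n : ℕ,
      ∀ (ρu ρv : 𝒴 → ℝ), ρu ∈ stdSimplex ℝ 𝒴 → ρv ∈ stdSimplex ℝ 𝒴 →
      ∀ (α₀ α₁ : ℝ), 0 < α₀ → 0 < α₁ → α₀ + α₁ = 1 →
      ∀ (k : ℕ) (c : Fin k → ℝ × ℝ),
        (∀ j, 0 ≤ (c j).1 ∧ 0 ≤ (c j).2) →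
        (∀ j, 0 < (c j).1 + (c j).2) →
        ∃ c' : Fin n → ℝ × ℝ,
          (∀ i, 0 ≤ (c' i).1 ∧ 0 ≤ (c' i).2) ∧
          (∑ i, (c' i).1 = ∑ j, (c j).1) ∧
          (∑ i, (c' i).2 = ∑ j, (c j).2) ∧
          (∑ i, |(c' i).1 / α₀ - (c' i).2 / α₁|
            ≤ ∑ j, |(c j).1 / α₀ - (c j).2 / α₁|) ∧
          |(∑ i, ((c' i).1 + (c' i).2) *
                h (fun y => ((c' i).1 * ρu y + (c' i).2 * ρv y) / ((c' i).1 + (c' i).2)))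
            - (∑ j, ((c j).1 + (c j).2) *
                h (fun y => ((c j).1 * ρu y + (c j).2 * ρv y) / ((c j).1 + (c j).2)))|
            ≤ 2 * ((∑ j, (c j).1 / α₀) + (∑ j, (c j).2 / α₁)) * ε := by
  intro ε hε
  classical
  obtain ⟨δ, hδ, Hδ⟩ := Metric.uniformContinuousOn_iff.mp
    ((isCompact_stdSimplex ℝ 𝒴).uniformContinuousOn_of_continuous hcont) ε hε
  refine ⟨⌈1/δ⌉₊ + 1, ?_⟩
  set n : ℕ := ⌈1/δ⌉₊ + 1 with hn
  have hn0 : 0 < n := Nat.succ_pos _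
  have hnpos : (0:ℝ) < n := by exact_mod_cast hn0
  have hinv : 1 / (n:ℝ) < δ := by
    rw [div_lt_iff₀ hnpos]
    have h1 : 1/δ < (n:ℝ) := by
      calc 1/δ ≤ (⌈1/δ⌉₊ : ℝ) := Nat.le_ceil _
        _ < n := by rw [hn]; push_cast; linarith
    calc (1:ℝ) = δ * (1/δ) := by field_simp
      _ < δ * n := by exact mul_lt_mul_of_pos_left h1 hδ
  intro ρu ρv hρu hρv α₀ α₁ hα₀ hα₁ hαs k c hc hcpos
  -- basic facts about simplex points
  have hub : ∀ (ρ : 𝒴 → ℝ), ρ ∈ stdSimplex ℝ 𝒴 → ∀ y, 0 ≤ ρ y ∧ ρ y ≤ 1 := by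
    intro ρ hρ y
    refine ⟨hρ.1 y, ?_⟩
    rw [← hρ.2]
    exact Finset.single_le_sum (fun i _ => hρ.1 i) (mem_univ y)
  set μ : ℝ → 𝒴 → ℝ := fun p y => p * ρu y + (1 - p) * ρv y with hμdef
  have hμmem : ∀ p : ℝ, 0 ≤ p → p ≤ 1 → μ p ∈ stdSimplex ℝ 𝒴 := by
    intro p hp0 hp1
    have hconv := (convex_stdSimplex ℝ 𝒴) hρu hρv hp0 (by linarith : (0:ℝ) ≤ 1 - p)
      (by ring)
    have heq : μ p = p • ρu + (1 - p) • ρv := by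
      funext y
      simp [μ, Pi.add_apply, Pi.smul_apply, smul_eq_mul]
    rw [heq]
    exact hconv
  have hdist : ∀ p q : ℝ, dist (μ p) (μ q) ≤ |p - q| := by
    intro p q
    rw [dist_pi_le_iff (abs_nonneg _)]
    intro y
    rw [Real.dist_eq]
    have he : μ p y - μ q y = (p - q) * (ρu y - ρv y) := by simp [μ]; ring
    rw [he, abs_mul]
    have h1 : |ρu y - ρv y| ≤ 1 := by
      have h2 := hub ρu hρu y; have h3 := hub ρv hρv y
      rw [abs_le]; constructor <;> linarith
    calc |p - q| * |ρu y - ρv y| ≤ |p - q| * 1 :=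
          mul_le_mul_of_nonneg_left h1 (abs_nonneg _)
      _ = |p - q| := mul_one _
  have key : ∀ p q : ℝ, 0 ≤ p → p ≤ 1 → 0 ≤ q → q ≤ 1 → |p - q| < δ →
      |h (μ p) - h (μ q)| ≤ ε := by
    intro p q hp0 hp1 hq0 hq1 hpq
    have := Hδ (μ p) (hμmem p hp0 hp1) (μ q) (hμmem q hq0 hq1)
      (lt_of_le_of_lt (hdist p q) hpq)
    rw [Real.dist_eq] at this
    linarith
  -- ratios
  set p : Fin k → ℝ := fun j => (c j).1 / ((c j).1 + (c j).2) with hpdef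
  have hp0 : ∀ j, 0 ≤ p j := fun j => div_nonneg (hc j).1 (hcpos j).le
  have hp1 : ∀ j, p j ≤ 1 := fun j =>
    div_le_one_of_le₀ (by linarith [(hc j).2]) (hcpos j).le
  have hpc : ∀ j, p j * ((c j).1 + (c j).2) = (c j).1 := by
    intro j
    rw [hpdef]
    exact div_mul_cancel₀ _ (hcpos j).ne'
  -- grouping map
  set g : Fin k → Fin n := fun j => ⟨min (⌊p j * n⌋₊) (n-1), by omega⟩ with hgdef
  have hint : ∀ j, ((g j : ℕ) : ℝ) ≤ p j * n ∧ p j * n ≤ ((g j : ℕ) : ℝ) + 1 := by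
    intro j
    have hnn : 0 ≤ p j * n := mul_nonneg (hp0 j) hnpos.le
    have hfl : (⌊p j * n⌋₊ : ℝ) ≤ p j * n := Nat.floor_le hnn
    have hfl2 : p j * n < (⌊p j * n⌋₊ : ℝ) + 1 := Nat.lt_floor_add_one _
    have hgj : (g j : ℕ) = min (⌊p j * n⌋₊) (n-1) := rfl
    constructor
    · have : ((g j : ℕ) : ℝ) ≤ (⌊p j * n⌋₊ : ℝ) := by
        exact_mod_cast hgj ▸ min_le_left _ _
      linarith
    · rcases le_or_gt (⌊p j * n⌋₊) (n-1) with hle | hlt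
      · have : (g j : ℕ) = ⌊p j * n⌋₊ := hgj.trans (min_eq_left hle)
        rw [this]; linarith
      · have hgeq : (g j : ℕ) = n - 1 := hgj.trans (min_eq_right hlt.le)
        have hup : p j * n ≤ n := by
          calc p j * n ≤ 1 * n := mul_le_mul_of_nonneg_right (hp1 j) hnpos.le
            _ = n := one_mul _
        have : ((g j : ℕ) : ℝ) + 1 = n := by
          have h1 : 1 ≤ n := hn0
          rw [hgeq, Nat.cast_sub h1, Nat.cast_one]
          ring
        linarith
  refine ⟨fun i => (∑ j ∈ univ.filter (fun j => g j = i), (c j).1,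
                    ∑ j ∈ univ.filter (fun j => g j = i), (c j).2), ?_, ?_, ?_, ?_, ?_⟩
  · intro i
    dsimp only
    exact ⟨Finset.sum_nonneg (fun j _ => (hc j).1),
           Finset.sum_nonneg (fun j _ => (hc j).2)⟩
  · exact Finset.sum_fiberwise univ g (fun j => (c j).1)
  · exact Finset.sum_fiberwise univ g (fun j => (c j).2)
  · calc ∑ i, |(∑ j ∈ univ.filter (fun j => g j = i), (c j).1) / α₀
            - (∑ j ∈ univ.filter (fun j => g j = i), (c j).2) / α₁|
        = ∑ i, |∑ j ∈ univ.filter (fun j => g j = i), ((c j).1 / α₀ - (c j).2 / α₁)| := by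
          refine Finset.sum_congr rfl (fun i _ => ?_)
          rw [Finset.sum_sub_distrib, Finset.sum_div, Finset.sum_div]
      _ ≤ ∑ i, ∑ j ∈ univ.filter (fun j => g j = i), |(c j).1 / α₀ - (c j).2 / α₁| :=
          Finset.sum_le_sum (fun i _ => Finset.abs_sum_le_sum_abs _ _)
      _ = ∑ j, |(c j).1 / α₀ - (c j).2 / α₁| :=
          Finset.sum_fiberwise univ g (fun j => |(c j).1 / α₀ - (c j).2 / α₁|)
  · -- the main estimate
    dsimp only
    set fib : Fin n → Finset (Fin k) := fun i => univ.filter (fun j => g j = i) with hfib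
    set A : Fin n → ℝ := fun i => ∑ j ∈ fib i, (c j).1 with hA
    set B : Fin n → ℝ := fun i => ∑ j ∈ fib i, (c j).2 with hB
    have hT : ∀ i, A i + B i = ∑ j ∈ fib i, ((c j).1 + (c j).2) := by
      intro i; rw [hA, hB, ← Finset.sum_add_distrib]
    -- rewrite each original term via μ
    have harg : ∀ a b : ℝ, 0 < a + b →
        (fun y => (a * ρu y + b * ρv y) / (a + b)) = μ (a / (a + b)) := by
      intro a b hab
      funext y
      rw [hμdef]
      field_simp
      try ring
    have hEj : ∀ j, (fun y => ((c j).1 * ρu y + (c j).2 * ρv y) / ((c j).1 + (c j).2))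
        = μ (p j) := fun j => harg _ _ (hcpos j)
    -- per-group bound
    have hgroup : ∀ i : Fin n,
        |(A i + B i) * h (fun y => (A i * ρu y + B i * ρv y) / (A i + B i))
          - ∑ j ∈ fib i, ((c j).1 + (c j).2) * h (μ (p j))|
          ≤ ∑ j ∈ fib i, ((c j).1 + (c j).2) * ε := by
      intro i
      rcases Finset.eq_empty_or_nonempty (fib i) with hemp | hne
      · rw [hemp]
        simp [hA, hB, hemp]
      · have hTpos : 0 < A i + B i := by
          rw [hT i]
          exact Finset.sum_pos (fun j _ => hcpos j) hne
        set P : ℝ := A i / (A i + B i) with hPdef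
        have hP0 : 0 ≤ P := div_nonneg (Finset.sum_nonneg (fun j _ => (hc j).1)) hTpos.le
        have hP1 : P ≤ 1 := by
          apply div_le_one_of_le₀ _ hTpos.le
          have : 0 ≤ B i := Finset.sum_nonneg (fun j _ => (hc j).2)
          linarith
        -- P lies in the same cell [i/n, (i+1)/n]
        have hPn : ((i : ℕ) : ℝ) * (A i + B i) ≤ A i * n ∧
            A i * n ≤ (((i : ℕ) : ℝ) + 1) * (A i + B i) := by
          have h1 : A i * n = ∑ j ∈ fib i, (p j * n) * ((c j).1 + (c j).2) := by
            rw [hA, Finset.sum_mul]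
            refine Finset.sum_congr rfl (fun j _ => ?_)
            rw [mul_comm (p j) (n:ℝ), mul_assoc, hpc j]
            ring
          constructor
          · rw [h1, hT i, Finset.mul_sum]
            refine Finset.sum_le_sum (fun j hj => ?_)
            have hji : g j = i := by
              rw [hfib] at hj; exact (Finset.mem_filter.mp hj).2
            have := (hint j).1
            rw [hji] at this
            exact mul_le_mul_of_nonneg_right this (hcpos j).le
          · rw [h1, hT i, Finset.mul_sum]
            refine Finset.sum_le_sum (fun j hj => ?_)
            have hji : g j = i := by
              rw [hfib] at hj; exact (Finset.mem_filter.mp hj).2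
            have := (hint j).2
            rw [hji] at this
            exact mul_le_mul_of_nonneg_right this (hcpos j).le
        have hPcell : ((i : ℕ) : ℝ) / n ≤ P ∧ P ≤ (((i : ℕ) : ℝ) + 1) / n := by
          rw [hPdef]
          constructor
          · rw [div_le_div_iff₀ hnpos hTpos]
            exact hPn.1
          · rw [div_le_div_iff₀ hTpos hnpos]
            exact hPn.2
        -- rewrite merged term
        rw [harg (A i) (B i) hTpos, ← hPdef]
        have hsum1 : (A i + B i) * h (μ P) = ∑ j ∈ fib i, ((c j).1 + (c j).2) * h (μ P) := by
          rw [hT i, Finset.sum_mul]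
        rw [hsum1, ← Finset.sum_sub_distrib]
        refine le_trans (Finset.abs_sum_le_sum_abs _ _) (Finset.sum_le_sum (fun j hj => ?_))
        rw [← mul_sub, abs_mul, abs_of_nonneg (hcpos j).le]
        refine mul_le_mul_of_nonneg_left ?_ (hcpos j).le
        -- |h (μ P) - h (μ (p j))| ≤ ε
        have hji : g j = i := by
          rw [hfib] at hj; exact (Finset.mem_filter.mp hj).2
        have hj1 := (hint j).1
        have hj2 := (hint j).2
        rw [hji] at hj1 hj2
        have hjcell1 : ((i : ℕ) : ℝ) / n ≤ p j := by
          rw [div_le_iff₀ hnpos]; linarith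
        have hjcell2 : p j ≤ (((i : ℕ) : ℝ) + 1) / n := by
          rw [le_div_iff₀ hnpos]; linarith
        have hclose : |P - p j| < δ := by
          have h1 : |P - p j| ≤ 1 / n := by
            rw [abs_le]
            have := hPcell.1; have := hPcell.2
            constructor
            · have : (((i : ℕ) : ℝ) + 1) / n - ((i : ℕ) : ℝ) / n = 1 / n := by
                field_simp
                ring
              linarith [hPcell.1]
            · have : (((i : ℕ) : ℝ) + 1) / n - ((i : ℕ) : ℝ) / n = 1 / n := by
                field_simp
                ring
              linarith [hPcell.2]
          linarith
        exact key P (p j) hP0 hP1 (hp0 j) (hp1 j) hclose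
    -- put it together
    have hEeq : (∑ j, ((c j).1 + (c j).2) *
          h (fun y => ((c j).1 * ρu y + (c j).2 * ρv y) / ((c j).1 + (c j).2)))
        = ∑ i, ∑ j ∈ fib i, ((c j).1 + (c j).2) * h (μ (p j)) := by
      rw [Finset.sum_fiberwise univ g (fun j => ((c j).1 + (c j).2) * h (μ (p j)))]
      exact Finset.sum_congr rfl (fun j _ => by rw [hEj j])
    rw [hEeq, ← Finset.sum_sub_distrib]
    have hW0 : 0 ≤ (∑ j, (c j).1 / α₀) + ∑ j, (c j).2 / α₁ := by
      have h1 : 0 ≤ ∑ j, (c j).1 / α₀ :=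
        Finset.sum_nonneg (fun j _ => div_nonneg (hc j).1 hα₀.le)
      have h2 : 0 ≤ ∑ j, (c j).2 / α₁ :=
        Finset.sum_nonneg (fun j _ => div_nonneg (hc j).2 hα₁.le)
      linarith
    calc |∑ i, ((A i + B i) * h (fun y => (A i * ρu y + B i * ρv y) / (A i + B i))
            - ∑ j ∈ fib i, ((c j).1 + (c j).2) * h (μ (p j)))|
        ≤ ∑ i, |(A i + B i) * h (fun y => (A i * ρu y + B i * ρv y) / (A i + B i))
            - ∑ j ∈ fib i, ((c j).1 + (c j).2) * h (μ (p j))| :=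
          Finset.abs_sum_le_sum_abs _ _
      _ ≤ ∑ i, ∑ j ∈ fib i, ((c j).1 + (c j).2) * ε :=
          Finset.sum_le_sum (fun i _ => hgroup i)
      _ = ∑ j, ((c j).1 + (c j).2) * ε :=
          Finset.sum_fiberwise univ g (fun j => ((c j).1 + (c j).2) * ε)
      _ = (∑ j, ((c j).1 + (c j).2)) * ε := by rw [Finset.sum_mul]
      _ ≤ ((∑ j, (c j).1 / α₀) + ∑ j, (c j).2 / α₁) * ε := by
          apply mul_le_mul_of_nonneg_right _ hε.le
          rw [← Finset.sum_add_distrib]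
          refine Finset.sum_le_sum (fun j _ => ?_)
          have h1 : α₀ ≤ 1 := by linarith
          have h2 : α₁ ≤ 1 := by linarith
          have h3 : (c j).1 ≤ (c j).1 / α₀ := by
            rw [le_div_iff₀ hα₀]
            nlinarith [(hc j).1]
          have h4 : (c j).2 ≤ (c j).2 / α₁ := by
            rw [le_div_iff₀ hα₁]
            nlinarith [(hc j).2]
          linarith
      _ ≤ 2 * ((∑ j, (c j).1 / α₀) + ∑ j, (c j).2 / α₁) * ε := by nlinarith
end

section
/- The perfectly fair MIFPO objective is linear: under the constraint β₀(u)·r_{u,v,j} = β₁(v)·r_{v,u,j} for all (u,v,j), the performance cost E_r = ∑_{(u,v,j)} (α₀β₀(u)r_{u,v,j} + α₁β₁(v)r_{v,u,j}) · h((α₀β₀(u)r_{u,v,j}·ρ_u + α₁β₁(v)r_{v,u,j}·ρ_v)/(α₀β₀(u)r_{u,v,j} + α₁β₁(v)r_{v,u,j})) equals ∑_{(u,v,j)} h((α₀ρ_u + α₁ρ_v)/(α₀+α₁)) · (α₀+α₁) · (1/2)(β₀(u)r_{u,v,j} + β₁(v)r_{v,u,j}), a linear function of the variables r. -/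
open Finset

theorem perfectly_fair_mifpo_objective_is_linear
    (S₀ S₁ 𝒴 : Type*) [Fintype S₀] [Fintype S₁] [Fintype 𝒴] (k : ℕ)
    (α₀ α₁ : ℝ) (hα₀ : 0 < α₀) (hα₁ : 0 < α₁)
    (β₀ : S₀ → ℝ) (β₁ : S₁ → ℝ) (hβ₀ : ∀ u, 0 < β₀ u) (hβ₁ : ∀ v, 0 < β₁ v)
    (ρu : S₀ → 𝒴 → ℝ) (ρv : S₁ → 𝒴 → ℝ)
    (hρu : ∀ u, ρu u ∈ stdSimplex ℝ 𝒴) (hρv : ∀ v, ρv v ∈ stdSimplex ℝ 𝒴)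
    (h : (𝒴 → ℝ) → ℝ)
    (r r' : S₀ → S₁ → Fin k → ℝ)
    (hr : ∀ u v j, 0 ≤ r u v j) (hr' : ∀ u v j, 0 ≤ r' u v j)
    (hfair : ∀ u v j, β₀ u * r u v j = β₁ v * r' u v j) :
    ∑ u, ∑ v, ∑ j,
        (α₀ * β₀ u * r u v j + α₁ * β₁ v * r' u v j) *
          h (fun y =>
            (α₀ * β₀ u * r u v j * ρu u y + α₁ * β₁ v * r' u v j * ρv v y) /
              (α₀ * β₀ u * r u v j + α₁ * β₁ v * r' u v j))
      = ∑ u, ∑ v, ∑ j,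
          h (fun y => (α₀ * ρu u y + α₁ * ρv v y) / (α₀ + α₁)) *
            (α₀ + α₁) * ((1 / 2) * (β₀ u * r u v j + β₁ v * r' u v j)) := by
  refine Finset.sum_congr rfl fun u _ => Finset.sum_congr rfl fun v _ =>
    Finset.sum_congr rfl fun j _ => ?_
  set c := β₀ u * r u v j with hc
  have hc' : β₁ v * r' u v j = c := (hfair u v j).symm
  have hcnn : 0 ≤ c := mul_nonneg (hβ₀ u).le (hr u v j)
  have key : α₀ * β₀ u * r u v j + α₁ * β₁ v * r' u v j = (α₀ + α₁) * c := by
    rw [mul_assoc, ← hc, mul_assoc, hc']; ring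
  rcases eq_or_lt_of_le hcnn with hc0 | hc0
  · have hr'0 : r' u v j = 0 := by
      have := hc'.trans hc0.symm
      exact (mul_eq_zero.mp this).resolve_left (hβ₁ v).ne' |>.symm ▸ rfl
    rw [key, ← hc0, hr'0]
    ring
  · have hfun : (fun y =>
        (α₀ * β₀ u * r u v j * ρu u y + α₁ * β₁ v * r' u v j * ρv v y) /
          (α₀ * β₀ u * r u v j + α₁ * β₁ v * r' u v j)) =
        fun y => (α₀ * ρu u y + α₁ * ρv v y) / (α₀ + α₁) := by
      funext y
      rw [key, mul_assoc α₀, ← hc, mul_assoc α₁, hc']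
      rw [mul_comm (α₀ + α₁) c, show α₀ * c * ρu u y + α₁ * c * ρv v y
        = c * (α₀ * ρu u y + α₁ * ρv v y) by ring, mul_div_mul_left _ _ hc0.ne']
    rw [hfun, key, hc']
    ring
end
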